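/- arXiv:1103.3906 — 3 statements merged into one kernel-verified Lean document; each statement's English description precedes it below -/
import Mathlib

section
/- Let H and K be Hilbert spaces and T : H → K a bounded linear operator with ||T|| = 1 and ||T||_e < 1. Then T has a maximizing vector, i.e. there exists a nonzero x ∈ H with ||Tx|| = ||x||, and moreover the space of maximizing vectors {x ∈ H : ||Tx|| = ||x||} is a finite-dimensional subspace of H. -/
open MeasureTheory ComplexConjugate

noncomputable section

namespace MeroIdx

variable {H K : Type*} [NormedAddCommGroup H] [InnerProductSpace ℂ H]
  [NormedAddCommGroup K] [InnerProductSpace ℂ K]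

/-- `sValue m T` is the `m`-th singular value of `T`, defined as the distance from `T`
to the operators of rank at most `m`. -/
def sValue (m : ℕ) (T : H →L[ℂ] K) : ℝ :=
  sInf { c : ℝ | ∃ R : H →L[ℂ] K, Module.rank ℂ ↥(LinearMap.range (R : H →ₗ[ℂ] K)) ≤ m ∧ c = ‖T - R‖ }

/-- The essential norm of `T` : the distance from `T` to the compact operators. -/
def essNorm (T : H →L[ℂ] K) : ℝ :=
  sInf { c : ℝ | ∃ S : H →L[ℂ] K, IsCompactOperator S ∧ c = ‖T - S‖ }

/-! For `‖T‖ ≤ 1` the parallelogram law gives `‖x - y‖² ≤ 2 δ x + 2 δ y + ‖T (x - y)‖²`, where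
`δ x = ‖x‖² - ‖T x‖²`. Hence maximizing vectors (`δ x = 0`) form a subspace. If moreover
`T = R + S` with `‖R‖ < 1` and `S` compact, then `‖T (x - y)‖ ≤ ‖R‖ ‖x - y‖ + ‖S x - S y‖`, so a
bounded sequence with `δ → 0` is Cauchy along every subsequence on which `S` converges. Applied to
almost maximizing unit vectors this yields a maximizing vector; applied inside the maximizing
subspace it shows that its closed unit ball is compact. -/

lemma exists_isCompactOperator_norm_sub_lt {T : H →L[ℂ] K} {c : ℝ} (h : essNorm T < c) :
    ∃ S : H →L[ℂ] K, IsCompactOperator S ∧ ‖T - S‖ < c := by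
  have hne : {c : ℝ | ∃ S : H →L[ℂ] K, IsCompactOperator S ∧ c = ‖T - S‖}.Nonempty :=
    ⟨_, 0, isCompactOperator_zero, rfl⟩
  obtain ⟨_, ⟨S, hS, rfl⟩, hlt⟩ := exists_lt_of_csInf_lt hne h
  exact ⟨S, hS, hlt⟩

section Contraction

open Filter Topology Metric

variable {𝕜 E F : Type*} [RCLike 𝕜] [NormedAddCommGroup E] [InnerProductSpace 𝕜 E]
  [NormedAddCommGroup F] [InnerProductSpace 𝕜 F] {T : E →L[𝕜] F}

lemma norm_sub_sq_le_of_norm_le_one (hT : ‖T‖ ≤ 1) (x y : E) :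
    ‖x - y‖ ^ 2 ≤
      2 * (‖x‖ ^ 2 - ‖T x‖ ^ 2) + 2 * (‖y‖ ^ 2 - ‖T y‖ ^ 2) + ‖T (x - y)‖ ^ 2 := by
  have hE := parallelogram_law_with_norm 𝕜 x y
  have hF := parallelogram_law_with_norm 𝕜 (T x) (T y)
  have hle : ‖T (x + y)‖ ≤ ‖x + y‖ := by simpa using T.le_of_opNorm_le hT (x + y)
  rw [map_add] at hle
  rw [map_sub]
  nlinarith [norm_nonneg (T x + T y)]

lemma norm_apply_sub_eq_of_norm_le_one (hT : ‖T‖ ≤ 1) {x y : E} (hx : ‖T x‖ = ‖x‖)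
    (hy : ‖T y‖ = ‖y‖) : ‖T (x - y)‖ = ‖x - y‖ := by
  have hle : ‖T (x - y)‖ ≤ ‖x - y‖ := by simpa using T.le_of_opNorm_le hT (x - y)
  have hge := norm_sub_sq_le_of_norm_le_one hT x y
  rw [hx, hy] at hge
  nlinarith [norm_nonneg (T (x - y))]

variable (T) in
def maximizingSubspace (hT : ‖T‖ ≤ 1) : Submodule 𝕜 E where
  carrier := {x | ‖T x‖ = ‖x‖}
  zero_mem' := by simp
  add_mem' {x y} hx hy := by
    simpa using norm_apply_sub_eq_of_norm_le_one hT (y := -y) hx (by simpa using hy)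
  smul_mem' c x hx := by simp_all [norm_smul]

lemma isClosed_maximizingSubspace (hT : ‖T‖ ≤ 1) : IsClosed (maximizingSubspace T hT : Set E) :=
  isClosed_eq (continuous_norm.comp T.continuous) continuous_norm

lemma one_sub_sq_mul_norm_sub_sq_le (hT : ‖T‖ ≤ 1) (S : E →L[𝕜] F) (x y : E) :
    (1 - ‖T - S‖ ^ 2) * ‖x - y‖ ^ 2 ≤
      2 * (‖x‖ ^ 2 - ‖T x‖ ^ 2) + 2 * (‖y‖ ^ 2 - ‖T y‖ ^ 2) +
        2 * ‖T - S‖ * ‖x - y‖ * ‖S x - S y‖ + ‖S x - S y‖ ^ 2 := by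
  have hsplit : ‖T (x - y)‖ ≤ ‖T - S‖ * ‖x - y‖ + ‖S x - S y‖ := by
    calc ‖T (x - y)‖ = ‖(T - S) (x - y) + (S x - S y)‖ := by
          rw [sub_apply, map_sub S, sub_add_cancel]
      _ ≤ ‖T - S‖ * ‖x - y‖ + ‖S x - S y‖ :=
        (norm_add_le _ _).trans (add_le_add_left ((T - S).le_opNorm _) _)
  have hsq := pow_le_pow_left₀ (norm_nonneg _) hsplit 2
  nlinarith [norm_sub_sq_le_of_norm_le_one hT x y]

theorem exists_tendsto_subseq_of_tendsto_defect [CompleteSpace E] (hT : ‖T‖ ≤ 1)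
    {S : E →L[𝕜] F} (hS : IsCompactOperator S) (hTS : ‖T - S‖ < 1) {u : ℕ → E} {M : ℝ}
    (hu : ∀ n, ‖u n‖ ≤ M) (hδ : Tendsto (fun n ↦ ‖u n‖ ^ 2 - ‖T (u n)‖ ^ 2) atTop (𝓝 0)) :
    ∃ x : E, ∃ φ : ℕ → ℕ, StrictMono φ ∧ Tendsto (u ∘ φ) atTop (𝓝 x) := by
  have hb : Bornology.IsBounded (Set.range u) :=
    isBounded_iff_forall_norm_le.2 ⟨M, by rintro _ ⟨n, rfl⟩; exact hu n⟩
  obtain ⟨C, hC, hSC⟩ := hS.image_subset_compact_of_bounded hb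
  obtain ⟨z, -, φ, hφ, hz⟩ := hC.tendsto_subseq fun n ↦ hSC ⟨u n, ⟨n, rfl⟩, rfl⟩
  suffices CauchySeq (u ∘ φ) from (cauchySeq_tendsto_of_complete this).imp fun _ hx ↦ ⟨φ, hφ, hx⟩
  set v := u ∘ φ
  set r := ‖T - S‖
  have hfst : Tendsto (Prod.fst : ℕ × ℕ → ℕ) atTop atTop := by
    rw [← prod_atTop_atTop_eq]; exact tendsto_fst
  have hsnd : Tendsto (Prod.snd : ℕ × ℕ → ℕ) atTop atTop := by
    rw [← prod_atTop_atTop_eq]; exact tendsto_snd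
  have hv : ∀ n, ‖v n‖ ≤ M := fun n ↦ hu (φ n)
  have hδv : Tendsto (fun n ↦ ‖v n‖ ^ 2 - ‖T (v n)‖ ^ 2) atTop (𝓝 0) :=
    hδ.comp hφ.tendsto_atTop
  have hSv : Tendsto (fun p : ℕ × ℕ ↦ ‖S (v p.1) - S (v p.2)‖) atTop (𝓝 0) := by
    have hSz : Tendsto (fun n ↦ S (v n)) atTop (𝓝 z) := hz
    simpa [dist_eq_norm] using cauchySeq_iff_tendsto_dist_atTop_0.1 hSz.cauchySeq
  set bound : ℕ × ℕ → ℝ := fun p ↦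
    2 * (‖v p.1‖ ^ 2 - ‖T (v p.1)‖ ^ 2) + 2 * (‖v p.2‖ ^ 2 - ‖T (v p.2)‖ ^ 2) +
      2 * r * (2 * M) * ‖S (v p.1) - S (v p.2)‖ + ‖S (v p.1) - S (v p.2)‖ ^ 2
  have hbound : Tendsto bound atTop (𝓝 0) := by
    have h := ((((hδv.comp hfst).const_mul 2).add ((hδv.comp hsnd).const_mul 2)).add
      (hSv.const_mul (2 * r * (2 * M)))).add (hSv.pow 2)
    simpa [bound] using h
  have hr : 0 < 1 - r ^ 2 := by nlinarith [norm_nonneg (T - S)]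
  have hle : ∀ p : ℕ × ℕ, dist (v p.1) (v p.2) ≤ √(bound p / (1 - r ^ 2)) := fun p ↦ by
    refine Real.le_sqrt_of_sq_le ((le_div_iff₀ hr).2 ?_)
    have hd : ‖v p.1 - v p.2‖ ≤ 2 * M := (norm_sub_le _ _).trans (by linarith [hv p.1, hv p.2])
    rw [dist_eq_norm, mul_comm]
    refine (one_sub_sq_mul_norm_sub_sq_le hT S _ _).trans ?_
    dsimp only [bound]
    gcongr
  rw [cauchySeq_iff_tendsto_dist_atTop_0]
  refine squeeze_zero (fun _ ↦ dist_nonneg) hle ?_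
  simpa using (hbound.div_const (1 - r ^ 2)).sqrt

theorem finiteDimensional_maximizingSubspace [CompleteSpace E] (hT : ‖T‖ ≤ 1)
    {S : E →L[𝕜] F} (hS : IsCompactOperator S) (hTS : ‖T - S‖ < 1) :
    FiniteDimensional 𝕜 (maximizingSubspace T hT) := by
  refine .of_isCompact_closedBall₀ 𝕜 one_pos (IsSeqCompact.isCompact fun v hv ↦ ?_)
  have hv1 : ∀ n, ‖(v n : E)‖ ≤ 1 := fun n ↦ by simpa using hv n
  have hvmax : ∀ n, ‖T (v n)‖ = ‖(v n : E)‖ := fun n ↦ (v n).2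
  obtain ⟨x, φ, hφ, hx⟩ := exists_tendsto_subseq_of_tendsto_defect hT hS hTS hv1
    (by simp [hvmax])
  have hxV : x ∈ maximizingSubspace T hT :=
    (isClosed_maximizingSubspace hT).mem_of_tendsto hx (.of_forall fun n ↦ (v (φ n)).2)
  have hvx : Tendsto (v ∘ φ) atTop (𝓝 ⟨x, hxV⟩) := tendsto_subtype_rng.2 hx
  exact ⟨_, isClosed_closedBall.mem_of_tendsto hvx (.of_forall fun n ↦ hv (φ n)), φ, hφ, hvx⟩

theorem exists_ne_zero_norm_apply_eq [CompleteSpace E] (hT : ‖T‖ = 1) {S : E →L[𝕜] F}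
    (hS : IsCompactOperator S) (hTS : ‖T - S‖ < 1) : ∃ x : E, x ≠ 0 ∧ ‖T x‖ = ‖x‖ := by
  set A := (fun x ↦ ‖T x‖) '' sphere (0 : E) 1
  have hA : sSup A = 1 := hT ▸ T.sSup_sphere_eq_norm
  have hAne : A.Nonempty := by
    by_contra h
    rw [Set.not_nonempty_iff_eq_empty.1 h, Real.sSup_empty] at hA
    exact zero_ne_one hA
  have hAbdd : BddAbove A := ⟨‖T‖, by
    rintro _ ⟨x, hx, rfl⟩
    simpa [mem_sphere_zero_iff_norm.1 hx] using T.le_opNorm x⟩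
  obtain ⟨a, -, ha, haA⟩ := exists_seq_tendsto_sSup hAne hAbdd
  choose u hu hTu using haA
  have hu1 : ∀ n, ‖u n‖ = 1 := fun n ↦ mem_sphere_zero_iff_norm.1 (hu n)
  have hTu1 : Tendsto (fun n ↦ ‖T (u n)‖) atTop (𝓝 1) := by
    simpa only [hTu, hA] using ha
  obtain ⟨x, φ, hφ, hx⟩ := exists_tendsto_subseq_of_tendsto_defect hT.le hS hTS (hu1 · |>.le)
    (by simpa [hu1] using (hTu1.pow 2).const_sub 1)
  have hx1 : ‖x‖ = 1 :=
    mem_sphere_zero_iff_norm.1 (isClosed_sphere.mem_of_tendsto hx (.of_forall fun n ↦ hu (φ n)))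
  have hTx1 : ‖T x‖ = 1 :=
    tendsto_nhds_unique ((continuous_norm.comp T.continuous).tendsto x |>.comp hx)
      (hTu1.comp hφ.tendsto_atTop)
  exact ⟨x, norm_ne_zero_iff.1 (hx1 ▸ one_ne_zero), hTx1.trans hx1.symm⟩

end Contraction

theorem exists_maximizingVector_of_essNorm_lt_one_general
    {H K : Type*} [NormedAddCommGroup H] [InnerProductSpace ℂ H] [CompleteSpace H]
    [NormedAddCommGroup K] [InnerProductSpace ℂ K]
    (T : H →L[ℂ] K) (hT : ‖T‖ = 1) (he : essNorm T < 1) :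
    (∃ x : H, x ≠ 0 ∧ ‖T x‖ = ‖x‖) ∧
      ∃ V : Submodule ℂ H, FiniteDimensional ℂ ↥V ∧
        (V : Set H) = { x : H | ‖T x‖ = ‖x‖ } := by
  obtain ⟨S, hS, hTS⟩ := exists_isCompactOperator_norm_sub_lt he
  exact ⟨exists_ne_zero_norm_apply_eq hT hS hTS, maximizingSubspace T hT.le,
    finiteDimensional_maximizingSubspace hT.le hS hTS, rfl⟩

/-- An operator of norm one whose essential norm is less than one has a
maximizing vector, and the set of its maximizing vectors (together with `0`) is a
finite-dimensional subspace. -/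
theorem exists_maximizingVector_of_essNorm_lt_one
    {H K : Type*} [NormedAddCommGroup H] [InnerProductSpace ℂ H] [CompleteSpace H]
    [NormedAddCommGroup K] [InnerProductSpace ℂ K] [CompleteSpace K]
    (T : H →L[ℂ] K) (hT : ‖T‖ = 1) (he : essNorm T < 1) :
    (∃ x : H, x ≠ 0 ∧ ‖T x‖ = ‖x‖) ∧
      ∃ V : Submodule ℂ H, FiniteDimensional ℂ ↥V ∧
        (V : Set H) = { x : H | ‖T x‖ = ‖x‖ } :=
  exists_maximizingVector_of_essNorm_lt_one_general T hT he

end MeroIdx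
end
end

section
/- Let Ψ ∈ L^∞(M_n) with ||H_Ψ||_e < ||H_Ψ|| = ||Ψ||_∞, and suppose there is a constant t > ||H_Ψ||_e with ||Ψ(ζ)ξ|| ≥ t||ξ|| for a.e. ζ and all ξ ∈ ℂ^n (i.e. the smallest singular value of Ψ(ζ) is at least t a.e.). Then ker T_Ψ = { f ∈ H² (ℂ^n) : ||H_Ψ f||_2 = ||Ψ f||_2 } is a nonzero finite-dimensional subspace of H²(ℂ^n). -/
open MeasureTheory ComplexConjugate

noncomputable section

namespace MeroIdx

/-! Singular values and essential norm of operators between Hilbert spaces -/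

variable {H K : Type*} [NormedAddCommGroup H] [InnerProductSpace ℂ H]
  [NormedAddCommGroup K] [InnerProductSpace ℂ K]

/-! The circle, L², Hardy space -/

instance : Fact (0 < 2 * Real.pi) := ⟨by positivity⟩

abbrev circ : Type := AddCircle (2 * Real.pi)

/-- Normalized Lebesgue (Haar) measure on the circle. -/
def mu : Measure circ := @AddCircle.haarAddCircle (2 * Real.pi) _

instance : IsProbabilityMeasure mu := by unfold mu; infer_instance

abbrev L2 (m : ℕ) := Lp (EuclideanSpace ℂ (Fin m)) 2 mu

/-- The function `ζ ↦ ζ` on the circle (i.e. `t ↦ exp (i t)`). -/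
def expmap : circ → ℂ := fun t => fourier 1 t

/-- The element `z^k ⬝ e_i` of `L²(ℂ^m)`. -/
def fvec (m : ℕ) (k : ℤ) (i : Fin m) : L2 m :=
  ContinuousMap.toLp 2 mu ℂ
    ⟨fun t => (fourier k t : ℂ) • (EuclideanSpace.single i (1 : ℂ)),
      ((fourier k).continuous).smul continuous_const⟩

/-- The span of the negative-frequency basis vectors. -/
def negSpan (m : ℕ) : Submodule ℂ (L2 m) :=
  Submodule.span ℂ { f | ∃ k : ℤ, k < 0 ∧ ∃ i : Fin m, f = fvec m k i }

/-- The Hardy space `H²(ℂ^m)`: the orthogonal complement of the negative frequencies,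
i.e. the functions in `L²` whose negative Fourier coefficients vanish. -/
def Hardy (m : ℕ) : Submodule ℂ (L2 m) := (negSpan m)ᗮ

instance (m : ℕ) : CompleteSpace ↥(Hardy m) :=
  (Submodule.isClosed_orthogonal _).completeSpace_coe

/-- Orthogonal projection onto the Hardy space. -/
def Pplus (m : ℕ) : L2 m →L[ℂ] ↥(Hardy m) := (Hardy m).orthogonalProjectionOnto

/-- `P₊` as an endomorphism of `L²`. -/
def PplusL (m : ℕ) : L2 m →L[ℂ] L2 m := (Hardy m).subtypeL.comp (Pplus m)

/-- `P₋ = I - P₊`, the orthogonal projection onto `H²₋(ℂ^m) = L² ⊖ H²`. -/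
def PminusL (m : ℕ) : L2 m →L[ℂ] L2 m := ContinuousLinearMap.id ℂ (L2 m) - PplusL m

/-! Matrix symbols, multiplication operators, Hankel and Toeplitz operators -/

/-- The continuous linear map `ℂ^n → ℂ^m` given by a matrix. -/
def matCLM {m n : ℕ} (A : Matrix (Fin m) (Fin n) ℂ) :
    EuclideanSpace ℂ (Fin n) →L[ℂ] EuclideanSpace ℂ (Fin m) :=
  LinearMap.toContinuousLinearMap (Matrix.toEuclideanLin A)

/-- The operator norm of a matrix (as an operator `ℓ²(n) → ℓ²(m)`). -/
def matOpNorm {m n : ℕ} (A : Matrix (Fin m) (Fin n) ℂ) : ℝ := ‖matCLM A‖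

/-- The `j`-th singular value of a matrix. -/
def matSV {m n : ℕ} (j : ℕ) (A : Matrix (Fin m) (Fin n) ℂ) : ℝ := sValue j (matCLM A)

/-- Essential supremum of a (nonnegative) real function on the circle. -/
def essSupR (g : circ → ℝ) : ℝ := (essSup (fun t => ENNReal.ofReal (g t)) mu).toReal

/-- The `L^∞(M_{m,n})`-norm: essential supremum of the pointwise operator norm. -/
def linfNorm {m n : ℕ} (Φ : circ → Matrix (Fin m) (Fin n) ℂ) : ℝ :=
  essSupR fun t => matOpNorm (Φ t)

/-- `M` is the operator of multiplication by the matrix function `Φ` on `L²`. -/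
def IsMulOp {m n : ℕ} (Φ : circ → Matrix (Fin m) (Fin n) ℂ) (M : L2 n →L[ℂ] L2 m) : Prop :=
  ∀ f : L2 n, (M f : circ → EuclideanSpace ℂ (Fin m))
      =ᵐ[mu] fun t => Matrix.toEuclideanLin (Φ t) (f t)

/-- The Hankel operator `H_Φ = P₋ M_Φ : H²(ℂ^n) → H²₋(ℂ^m) ⊆ L²(ℂ^m)`,
presented in terms of the multiplication operator `M = M_Φ`. -/
def Hankel {m n : ℕ} (M : L2 n →L[ℂ] L2 m) : ↥(Hardy n) →L[ℂ] L2 m :=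
  (PminusL m).comp (M.comp (Hardy n).subtypeL)

/-- The Toeplitz operator `T_Φ = P₊ M_Φ : H²(ℂ^n) → H²(ℂ^m)`. -/
def Toeplitz {m n : ℕ} (M : L2 n →L[ℂ] L2 m) : ↥(Hardy n) →L[ℂ] ↥(Hardy m) :=
  (Pplus m).comp (M.comp (Hardy n).subtypeL)

/-! Blaschke–Potapov products and the class `H^∞_{(k)}` -/

/-- An elementary Blaschke–Potapov factor. -/
def bpFactor {n : ℕ} (l : ℂ) (P : Matrix (Fin n) (Fin n) ℂ) (z : ℂ) :
    Matrix (Fin n) (Fin n) ℂ :=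
  ((z - l) / (1 - (starRingEnd ℂ) l * z)) • P + (1 - P)

/-- `B` (as a function on the circle) is the boundary-value function of a finite
Blaschke–Potapov product of degree `k`. -/
def IsBPProd (n k : ℕ) (B : circ → Matrix (Fin n) (Fin n) ℂ) : Prop :=
  ∃ (r : ℕ) (U : Matrix (Fin n) (Fin n) ℂ) (l : Fin r → ℂ)
    (P : Fin r → Matrix (Fin n) (Fin n) ℂ),
    U ∈ Matrix.unitaryGroup (Fin n) ℂ ∧ (∀ j, ‖l j‖ < 1) ∧
    (∀ j, IsSelfAdjoint (P j) ∧ P j * P j = P j) ∧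
    (∑ j, (P j).rank) = k ∧
    ∀ t, B t = U * (List.ofFn fun j => bpFactor (l j) (P j) (expmap t)).prod

/-- `Q ∈ H^∞_{(k)}(M_{m,n})`: there is a Blaschke–Potapov product `B` of degree `k`
such that `QB ∈ H^∞`, i.e. multiplication by `QB` maps `H²(ℂ^n)` into `H²(ℂ^m)`. -/
def HkClass {m n : ℕ} (k : ℕ) (Q : circ → Matrix (Fin m) (Fin n) ℂ) : Prop :=
  ∃ (B : circ → Matrix (Fin n) (Fin n) ℂ) (M : L2 n →L[ℂ] L2 m),
    IsBPProd n k B ∧ IsMulOp (fun t => Q t * B t) M ∧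
    ∀ f : L2 n, f ∈ Hardy n → M f ∈ Hardy m

/-- The nested sets `Ω_j^{(k)}(Φ)` from superoptimal approximation:
`Ω_0` consists of the best approximants from `H^∞_{(k)}` in the `L^∞` norm and
`Ω_{j+1}` consists of those elements of `Ω_j` minimizing `ess sup s_{j+1}(Φ - Q)`. -/
def Omega {m n : ℕ} (k : ℕ) (Φ : circ → Matrix (Fin m) (Fin n) ℂ) :
    ℕ → Set (circ → Matrix (Fin m) (Fin n) ℂ)
  | 0 => { Q | HkClass k Q ∧ ∀ Q', HkClass k Q' →
      linfNorm (fun t => Φ t - Q t) ≤ linfNorm (fun t => Φ t - Q' t) }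
  | (j+1) => { Q | Q ∈ Omega k Φ j ∧ ∀ Q' ∈ Omega k Φ j,
      essSupR (fun t => matSV (j+1) (Φ t - Q t)) ≤ essSupR (fun t => matSV (j+1) (Φ t - Q' t)) }

/-- The superoptimal singular values `t_j^{(k)}(Φ)` of degree `k`. -/
def tSV {m n : ℕ} (k : ℕ) (Φ : circ → Matrix (Fin m) (Fin n) ℂ) (j : ℕ) : ℝ :=
  sInf { v : ℝ | ∃ Q ∈ Omega k Φ j, v = essSupR fun t => matSV j (Φ t - Q t) }

/-- `Φ` is `k`-admissible: `s_k(H_Φ) < s_{k-1}(H_Φ)` and the essential norm of `H_Φ`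
is less than every nonzero superoptimal singular value of degree `k` of `Φ`. -/
def kAdmissible {n : ℕ} (k : ℕ) (Φ : circ → Matrix (Fin n) (Fin n) ℂ)
    (MΦ : L2 n →L[ℂ] L2 n) : Prop :=
  IsMulOp Φ MΦ ∧ sValue k (Hankel MΦ) < sValue (k-1) (Hankel MΦ) ∧
  ∀ j : ℕ, tSV k Φ j ≠ 0 → essNorm (Hankel MΦ) < tSV k Φ j

/-- The squared weighted norm `‖f‖²_W = ∫ (W(ζ) f(ζ), f(ζ)) dm(ζ)` for a matrix weight. -/
def wNormSq {n : ℕ} (W : circ → Matrix (Fin n) (Fin n) ℂ) (f : L2 n) : ℝ :=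
  ∫ t, (inner ℂ (Matrix.toEuclideanLin (W t) (f t)) (f t) : ℂ).re ∂mu

/-- `J` is the flip operator `(Jf)(ζ) = conj ζ • conj (f ζ)` on `L²(ℂ^m)`. -/
def IsFlip (m : ℕ) (J : L2 m → L2 m) : Prop :=
  ∀ f : L2 m, (J f : circ → EuclideanSpace ℂ (Fin m)) =ᵐ[mu]
    fun t => (starRingEnd ℂ) (expmap t) •
      (WithLp.toLp 2 (fun i => (starRingEnd ℂ) (f t i)) : EuclideanSpace ℂ (Fin m))

/-- `Φ ∈ L^∞(M_{m,n})`: measurable and essentially bounded. -/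
def MemLinf {m n : ℕ} (Φ : circ → Matrix (Fin m) (Fin n) ℂ) : Prop :=
  AEStronglyMeasurable Φ mu ∧
    essSup (fun t => ENNReal.ofReal (matOpNorm (Φ t))) mu < ⊤

/-!
Since `‖Ψ f‖² = ‖P₊ Ψ f‖² + ‖P₋ Ψ f‖²`, the kernel of `T_Ψ = P₊ M_Ψ` consists of the `f` with
`‖H_Ψ f‖ = ‖Ψ f‖`. Because `‖H_Ψ‖_e < ‖H_Ψ‖`, the Hankel operator attains its norm at a unit
vector `f`, and `‖Ψ f‖ ≤ ‖Ψ‖_∞ = ‖H_Ψ‖ = ‖H_Ψ f‖ ≤ ‖Ψ f‖` puts `f` in the kernel. On the kernel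
`‖H_Ψ f‖ = ‖Ψ f‖ ≥ t ‖f‖`, so a compact `S` with `‖H_Ψ - S‖ < t` is bounded below there, which
forces the closed subspace `ker T_Ψ` to be finite-dimensional.
-/

end MeroIdx

open Filter Topology Metric

section CompactOperator

variable {𝕜 E F : Type*} [NontriviallyNormedField 𝕜] [NormedAddCommGroup E] [NormedSpace 𝕜 E]
  [NormedAddCommGroup F] [NormedSpace 𝕜 F]

theorem ContinuousLinearMap.isClosedEmbedding_of_mul_norm_le [CompleteSpace E] (B : E →L[𝕜] F)
    {c : ℝ} (hc : 0 < c) (hB : ∀ x, c * ‖x‖ ≤ ‖B x‖) : IsClosedEmbedding B := by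
  obtain ⟨K, hK⟩ := antilipschitzWith_iff_exists_mul_le_norm.2 ⟨c, hc, hB⟩
  exact hK.isClosedEmbedding B.uniformContinuous

theorem ContinuousLinearMap.exists_tendsto_of_tendsto_apply [CompleteSpace E] (B : E →L[𝕜] F)
    {c : ℝ} (hc : 0 < c) (hB : ∀ x, c * ‖x‖ ≤ ‖B x‖) {ι : Type*} {l : Filter ι} [l.NeBot]
    {u : ι → E} {y : F} (hu : Tendsto (fun i => B (u i)) l (𝓝 y)) :
    ∃ x, Tendsto u l (𝓝 x) := by
  have hemb := B.isClosedEmbedding_of_mul_norm_le hc hB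
  obtain ⟨x, rfl⟩ : y ∈ Set.range B :=
    hemb.isClosed_range.mem_of_tendsto hu (.of_forall fun i => ⟨u i, rfl⟩)
  exact ⟨x, hemb.tendsto_nhds_iff.2 hu⟩

theorem IsCompactOperator.exists_tendsto_subseq {S : E →L[𝕜] F} (hS : IsCompactOperator S)
    {u : ℕ → E} {r : ℝ} (hu : ∀ n, ‖u n‖ ≤ r) :
    ∃ y, ∃ φ : ℕ → ℕ, StrictMono φ ∧ Tendsto (fun n => S (u (φ n))) atTop (𝓝 y) := by
  obtain ⟨C, hC, hSC⟩ := hS.image_closedBall_subset_compact r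
  obtain ⟨y, -, φ, hφ, hy⟩ :=
    hC.tendsto_subseq fun n => hSC ⟨u n, mem_closedBall_zero_iff.2 (hu n), rfl⟩
  exact ⟨y, φ, hφ, hy⟩

theorem FiniteDimensional.of_isCompactOperator_of_mul_norm_le [CompleteSpace 𝕜] [CompleteSpace E]
    {K : E →L[𝕜] F} (hK : IsCompactOperator K) {c : ℝ} (hc : 0 < c)
    (hKc : ∀ x, c * ‖x‖ ≤ ‖K x‖) : FiniteDimensional 𝕜 E := by
  have hemb := K.isClosedEmbedding_of_mul_norm_le hc hKc
  obtain ⟨C, hC, hKC⟩ := hK.image_closedBall_subset_compact 1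
  refine .of_isCompactOperator_id ((isCompactOperator_iff_exists_mem_nhds_image_subset_compact _).2
    ⟨closedBall 0 1, closedBall_mem_nhds 0 one_pos, K ⁻¹' C, hemb.isCompact_preimage hC, ?_⟩)
  rintro _ ⟨x, hx, rfl⟩
  exact hKC ⟨x, hx, rfl⟩

/-- A closed subspace on which `T` is bounded below by more than the distance from `T` to some
compact operator is finite-dimensional. -/
theorem Submodule.finiteDimensional_of_mul_norm_le [CompleteSpace 𝕜] [CompleteSpace E]
    {T S : E →L[𝕜] F} (hS : IsCompactOperator S) {V : Submodule 𝕜 E} (hV : IsClosed (V : Set E))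
    {t : ℝ} (hTS : ‖T - S‖ < t) (hT : ∀ x ∈ V, t * ‖x‖ ≤ ‖T x‖) : FiniteDimensional 𝕜 V := by
  have := hV.completeSpace_coe
  refine .of_isCompactOperator_of_mul_norm_le (K := S ∘L V.subtypeL) (hS.comp_clm _) (sub_pos.2 hTS)
    fun x => ?_
  have hTSx : ‖(T - S) x‖ ≤ ‖T - S‖ * ‖(x : E)‖ := (T - S).le_opNorm x
  have hSx : ‖T x‖ - ‖(T - S) x‖ ≤ ‖S x‖ := by simpa using norm_sub_norm_le (T x) ((T - S) x)
  show (t - ‖T - S‖) * ‖(x : E)‖ ≤ ‖S x‖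
  nlinarith [hT x x.2]

end CompactOperator

theorem ContinuousLinearMap.exists_seq_norm_le_one_tendsto_opNorm {𝕜 E F : Type*}
    [DenselyNormedField 𝕜] [NormedAddCommGroup E] [NormedSpace 𝕜 E] [NormedAddCommGroup F]
    [NormedSpace 𝕜 F] (T : E →L[𝕜] F) :
    ∃ u : ℕ → E, (∀ n, ‖u n‖ ≤ 1) ∧ Tendsto (fun n => ‖T (u n)‖) atTop (𝓝 ‖T‖) := by
  have hbdd : BddAbove ((fun x => ‖T x‖) '' closedBall 0 1) := by
    refine ⟨‖T‖, ?_⟩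
    rintro _ ⟨x, hx, rfl⟩
    exact T.unit_le_opNorm x (mem_closedBall_zero_iff.1 hx)
  obtain ⟨v, -, hv, hvS⟩ :=
    exists_seq_tendsto_sSup ((nonempty_closedBall.2 zero_le_one).image _) hbdd
  choose u hu hTu using hvS
  refine ⟨u, fun n => mem_closedBall_zero_iff.1 (hu n), ?_⟩
  simpa only [hTu, T.sSup_unitClosedBall_eq_norm] using hv

section Hilbert

open scoped InnerProduct
open RCLike

variable {𝕜 E F : Type*} [RCLike 𝕜] [NormedAddCommGroup E] [InnerProductSpace 𝕜 E]
  [NormedAddCommGroup F] [InnerProductSpace 𝕜 F] [CompleteSpace E] [CompleteSpace F]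

theorem ContinuousLinearMap.norm_adjoint_comp_self_apply_sub_sq_le (T : E →L[𝕜] F) {u : E}
    (hu : ‖u‖ ≤ 1) :
    ‖(T† ∘L T) u - ((‖T‖ ^ 2 : ℝ) : 𝕜) • u‖ ^ 2 ≤ 2 * ‖T‖ ^ 2 * (‖T‖ ^ 2 - ‖T u‖ ^ 2) := by
  have hA : ‖(T† ∘L T) u‖ ≤ ‖T‖ ^ 2 :=
    calc ‖(T† ∘L T) u‖ ≤ ‖T† ∘L T‖ * ‖u‖ := le_opNorm _ _
      _ ≤ ‖T† ∘L T‖ := mul_le_of_le_one_right (norm_nonneg _) hu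
      _ = ‖T‖ ^ 2 := by rw [norm_adjoint_comp_self, sq]
  have hau : ‖((‖T‖ ^ 2 : ℝ) : 𝕜) • u‖ ≤ ‖T‖ ^ 2 := by
    rw [norm_smul, norm_ofReal, abs_of_nonneg (sq_nonneg _)]
    exact mul_le_of_le_one_right (sq_nonneg _) hu
  have hre : re (inner 𝕜 ((T† ∘L T) u) (((‖T‖ ^ 2 : ℝ) : 𝕜) • u)) = ‖T‖ ^ 2 * ‖T u‖ ^ 2 := by
    rw [inner_smul_right, re_ofReal_mul, ← apply_norm_sq_eq_inner_adjoint_left]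
  rw [norm_sub_sq (𝕜 := 𝕜), hre]
  nlinarith [norm_nonneg ((T† ∘L T) u), norm_nonneg (((‖T‖ ^ 2 : ℝ) : 𝕜) • u)]

theorem ContinuousLinearMap.tendsto_adjoint_comp_self_apply_sub_smul (T : E →L[𝕜] F) {ι : Type*}
    {l : Filter ι} {u : ι → E} (hu : ∀ i, ‖u i‖ ≤ 1)
    (hTu : Tendsto (fun i => ‖T (u i)‖) l (𝓝 ‖T‖)) :
    Tendsto (fun i => (T† ∘L T) (u i) - ((‖T‖ ^ 2 : ℝ) : 𝕜) • u i) l (𝓝 0) := by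
  have hbound : Tendsto (fun i => √(2 * ‖T‖ ^ 2 * (‖T‖ ^ 2 - ‖T (u i)‖ ^ 2))) l (𝓝 0) := by
    convert (((hTu.pow 2).const_sub (‖T‖ ^ 2)).const_mul (2 * ‖T‖ ^ 2)).sqrt using 2
    simp
  refine tendsto_zero_iff_norm_tendsto_zero.2
    (squeeze_zero (fun _ => norm_nonneg _) (fun i => ?_) hbound)
  exact Real.le_sqrt_of_sq_le (T.norm_adjoint_comp_self_apply_sub_sq_le (hu i))

/-- Along a maximizing sequence `uₙ` we have `T†T uₙ - ‖T‖² uₙ → 0`, so `(‖T‖² - T†(T - S)) uₙ`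
is `T†S uₙ` up to a null sequence. Since `‖T - S‖ < ‖T‖` the operator `‖T‖² - T†(T - S)` is bounded
below, and compactness of `S` turns this into a convergent subsequence of `uₙ`. -/
theorem ContinuousLinearMap.exists_norm_eq_one_norm_apply_eq_opNorm (T S : E →L[𝕜] F)
    (hS : IsCompactOperator S) (hTS : ‖T - S‖ < ‖T‖) : ∃ f : E, ‖f‖ = 1 ∧ ‖T f‖ = ‖T‖ := by
  have hT : 0 < ‖T‖ := (norm_nonneg _).trans_lt hTS
  set a : ℝ := ‖T‖ ^ 2 with ha
  obtain ⟨u, hu, hTu⟩ := T.exists_seq_norm_le_one_tendsto_opNorm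
  obtain ⟨y, φ, hφ, hy⟩ := hS.exists_tendsto_subseq hu
  set B : E →L[𝕜] E := (a : 𝕜) • 1 - T† ∘L (T - S) with hBdef
  have hc : 0 < a - ‖T‖ * ‖T - S‖ := by
    rw [ha, sq]
    exact sub_pos.2 (mul_lt_mul_of_pos_left hTS hT)
  have hB : ∀ x, (a - ‖T‖ * ‖T - S‖) * ‖x‖ ≤ ‖B x‖ := fun x => by
    have hR : ‖(T† ∘L (T - S)) x‖ ≤ ‖T‖ * ‖T - S‖ * ‖x‖ :=
      calc ‖(T† ∘L (T - S)) x‖ ≤ ‖T† ∘L (T - S)‖ * ‖x‖ := le_opNorm _ _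
        _ ≤ ‖T†‖ * ‖T - S‖ * ‖x‖ := by gcongr; exact opNorm_comp_le _ _
        _ = ‖T‖ * ‖T - S‖ * ‖x‖ := by rw [LinearIsometryEquiv.norm_map]
    have hsub := norm_sub_norm_le ((a : 𝕜) • x) ((T† ∘L (T - S)) x)
    rw [norm_smul, norm_ofReal, abs_of_nonneg (sq_nonneg _)] at hsub
    simp only [hBdef, sub_apply, smul_apply, one_apply_eq_self]
    nlinarith
  have hBu : Tendsto (fun n => B (u (φ n))) atTop (𝓝 ((T†) y)) := by
    have hsplit : ∀ x, B x = (T†) (S x) - ((T† ∘L T) x - (a : 𝕜) • x) := fun x => by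
      simp only [hBdef, sub_apply, smul_apply, one_apply_eq_self, comp_apply, map_sub]
      abel
    simpa only [hsplit, sub_zero, Function.comp_def] using (((T†).continuous.tendsto y).comp hy).sub
      ((T.tendsto_adjoint_comp_self_apply_sub_smul hu hTu).comp hφ.tendsto_atTop)
  obtain ⟨f, hf⟩ := B.exists_tendsto_of_tendsto_apply hc hB hBu
  have hf1 : ‖f‖ ≤ 1 := le_of_tendsto' hf.norm fun n => hu (φ n)
  have hTf : ‖T f‖ = ‖T‖ :=
    tendsto_nhds_unique ((T.continuous.tendsto f).comp hf).norm (hTu.comp hφ.tendsto_atTop)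
  refine ⟨f, le_antisymm hf1 ((le_mul_iff_one_le_right hT).1 ?_), hTf⟩
  simpa only [hTf] using T.le_opNorm f

end Hilbert

namespace MeroIdx

theorem exists_isCompactOperator_norm_sub_lt_of_essNorm_lt {H K : Type*} [NormedAddCommGroup H]
    [InnerProductSpace ℂ H] [NormedAddCommGroup K] [InnerProductSpace ℂ K] {T : H →L[ℂ] K}
    {c : ℝ} (h : essNorm T < c) : ∃ S : H →L[ℂ] K, IsCompactOperator S ∧ ‖T - S‖ < c := by
  have hne : { c : ℝ | ∃ S : H →L[ℂ] K, IsCompactOperator S ∧ c = ‖T - S‖ }.Nonempty :=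
    ⟨‖T - 0‖, 0, isCompactOperator_zero, rfl⟩
  obtain ⟨-, ⟨S, hS, rfl⟩, hlt⟩ := exists_lt_of_csInf_lt hne h
  exact ⟨S, hS, hlt⟩

theorem norm_sq_eq_norm_Pplus_sq_add_norm_PminusL_sq (m : ℕ) (g : L2 m) :
    ‖g‖ ^ 2 = ‖Pplus m g‖ ^ 2 + ‖PminusL m g‖ ^ 2 := by
  have hminus : ‖PminusL m g‖ = ‖(Hardy m)ᗮ.orthogonalProjectionOnto g‖ := by
    rw [Submodule.orthogonalProjectionOnto_orthogonal]
    rfl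
  rw [Submodule.norm_sq_eq_add_norm_sq_projection g (Hardy m), hminus]
  rfl

variable {m n : ℕ}

theorem norm_apply_sq_eq_toeplitz_sq_add_hankel_sq (M : L2 n →L[ℂ] L2 m) (f : Hardy n) :
    ‖M f‖ ^ 2 = ‖Toeplitz M f‖ ^ 2 + ‖Hankel M f‖ ^ 2 :=
  norm_sq_eq_norm_Pplus_sq_add_norm_PminusL_sq m (M f)

theorem norm_hankel_apply_le (M : L2 n →L[ℂ] L2 m) (f : Hardy n) : ‖Hankel M f‖ ≤ ‖M f‖ := by
  have := norm_apply_sq_eq_toeplitz_sq_add_hankel_sq M f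
  exact (sq_le_sq₀ (norm_nonneg _) (norm_nonneg _)).1 (by nlinarith [sq_nonneg ‖Toeplitz M f‖])

theorem toeplitz_apply_eq_zero_iff (M : L2 n →L[ℂ] L2 m) (f : Hardy n) :
    Toeplitz M f = 0 ↔ ‖Hankel M f‖ = ‖M f‖ := by
  rw [← norm_eq_zero, ← sq_eq_zero_iff, ← sq_eq_sq₀ (norm_nonneg _) (norm_nonneg _),
    norm_apply_sq_eq_toeplitz_sq_add_hankel_sq]
  constructor <;> intro h <;> linarith

theorem MemLinf.ae_matOpNorm_le {Ψ : circ → Matrix (Fin m) (Fin n) ℂ} (hΨ : MemLinf Ψ) :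
    ∀ᵐ ζ ∂mu, matOpNorm (Ψ ζ) ≤ linfNorm Ψ := by
  filter_upwards [ae_le_essSup (μ := mu) (f := fun ζ => ENNReal.ofReal (matOpNorm (Ψ ζ)))]
    with ζ hζ
  have h := ENNReal.toReal_mono hΨ.2.ne hζ
  rwa [ENNReal.toReal_ofReal (show 0 ≤ matOpNorm (Ψ ζ) from norm_nonneg _)] at h

theorem IsMulOp.norm_apply_le {Ψ : circ → Matrix (Fin m) (Fin n) ℂ} {M : L2 n →L[ℂ] L2 m}
    (hM : IsMulOp Ψ M) (hΨ : MemLinf Ψ) (f : L2 n) : ‖M f‖ ≤ linfNorm Ψ * ‖f‖ := by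
  refine Lp.norm_le_mul_norm_of_ae_le_mul ?_
  filter_upwards [hM f, hΨ.ae_matOpNorm_le] with ζ hMf hΨζ
  rw [hMf]
  exact ((matCLM (Ψ ζ)).le_opNorm (f ζ)).trans (by gcongr; exact hΨζ)

theorem IsMulOp.mul_norm_le_norm_apply {Ψ : circ → Matrix (Fin m) (Fin n) ℂ}
    {M : L2 n →L[ℂ] L2 m} (hM : IsMulOp Ψ M) {t : ℝ}
    (hlow : ∀ᵐ ζ ∂mu, ∀ ξ : EuclideanSpace ℂ (Fin n), t * ‖ξ‖ ≤ ‖matCLM (Ψ ζ) ξ‖) (f : L2 n) :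
    t * ‖f‖ ≤ ‖M f‖ := by
  rcases le_or_gt t 0 with ht | ht
  · exact (mul_nonpos_of_nonpos_of_nonneg ht (norm_nonneg _)).trans (norm_nonneg _)
  have hf : ‖f‖ ≤ t⁻¹ * ‖M f‖ := by
    refine Lp.norm_le_mul_norm_of_ae_le_mul ?_
    filter_upwards [hM f, hlow] with ζ hMf hζ
    rw [hMf, le_inv_mul_iff₀ ht]
    exact hζ (f ζ)
  rwa [le_inv_mul_iff₀ ht] at hf

/-- If `Ψ` is badly approximable, `‖H_Ψ‖_e < ‖H_Ψ‖`, and the smallest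
singular value of `Ψ(ζ)` is at least `t > ‖H_Ψ‖_e` a.e., then
`ker T_Ψ = { f : ‖H_Ψ f‖ = ‖Ψ f‖ }` is a nonzero finite-dimensional subspace. -/
theorem ker_toeplitz_nonzero_finiteDimensional (n : ℕ)
    (Ψ : circ → Matrix (Fin n) (Fin n) ℂ) (hΨ : MemLinf Ψ)
    (M : L2 n →L[ℂ] L2 n) (hM : IsMulOp Ψ M)
    (h1 : essNorm (Hankel M) < ‖Hankel M‖)
    (h2 : ‖Hankel M‖ = linfNorm Ψ)
    (t : ℝ) (ht : essNorm (Hankel M) < t)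
    (hlow : ∀ᵐ ζ ∂mu, ∀ ξ : EuclideanSpace ℂ (Fin n), t * ‖ξ‖ ≤ ‖matCLM (Ψ ζ) ξ‖) :
    (LinearMap.ker (Toeplitz M : ↥(Hardy n) →ₗ[ℂ] ↥(Hardy n)) : Set ↥(Hardy n)) =
        { f : ↥(Hardy n) | ‖Hankel M f‖ = ‖M (↑f : L2 n)‖ } ∧
      LinearMap.ker (Toeplitz M : ↥(Hardy n) →ₗ[ℂ] ↥(Hardy n)) ≠ ⊥ ∧
      FiniteDimensional ℂ ↥(LinearMap.ker (Toeplitz M : ↥(Hardy n) →ₗ[ℂ] ↥(Hardy n))) := by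
  have hker (f : Hardy n) : f ∈ LinearMap.ker (Toeplitz M : Hardy n →ₗ[ℂ] Hardy n) ↔
      ‖Hankel M f‖ = ‖M f‖ :=
    toeplitz_apply_eq_zero_iff M f
  refine ⟨Set.ext hker, ?_, ?_⟩
  · obtain ⟨S, hS, hHS⟩ := exists_isCompactOperator_norm_sub_lt_of_essNorm_lt h1
    obtain ⟨f, hf1, hHf⟩ := (Hankel M).exists_norm_eq_one_norm_apply_eq_opNorm S hS hHS
    have hMf : ‖M f‖ ≤ ‖Hankel M f‖ :=
      calc ‖M f‖ ≤ linfNorm Ψ * ‖f‖ := hM.norm_apply_le hΨ f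
        _ = ‖Hankel M f‖ := by rw [hf1, mul_one, hHf, h2]
    refine (Submodule.ne_bot_iff _).2
      ⟨f, (hker f).2 ((norm_hankel_apply_le M f).antisymm hMf), ?_⟩
    rintro rfl
    simp at hf1
  · obtain ⟨S, hS, hHS⟩ := exists_isCompactOperator_norm_sub_lt_of_essNorm_lt ht
    exact Submodule.finiteDimensional_of_mul_norm_le hS (Toeplitz M).isClosed_ker hHS
      fun f hf => (hM.mul_norm_le_norm_apply hlow f).trans ((hker f).1 hf).ge

end MeroIdx
end
end

section
/- Let Ψ ∈ L^∞(M_n) and W = Ψ*Ψ the associated matrix weight, assumed to satisfy W(ζ) ≥ a²I a.e. for some a > 0. Suppose τ := sup{ ||H_Ψ f||_2 : f ∈ (ker T_Ψ)^⊥ ∩ H²(ℂ^n), ||f||_W = 1 } < 1, where ||f||²_W = ∫_T (W(ζ)f(ζ), f(ζ)) dm(ζ). Then ||T_Ψ f||²_2 ≥ (1 − τ²) a² ||f||²_2 for all f ∈ (ker T_Ψ)^⊥; in particular T_Ψ has closed range. -/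
open MeasureTheory ComplexConjugate

noncomputable section

section BoundedBelow

variable {𝕜 E F G : Type*} [RCLike 𝕜]
  [NormedAddCommGroup E] [NormedSpace 𝕜 E]
  [NormedAddCommGroup F] [NormedSpace 𝕜 F]
  [NormedAddCommGroup G] [NormedSpace 𝕜 G]

theorem bddAbove_norm_apply_of_norm_apply_eq_one (K : Submodule 𝕜 E) (A : E →L[𝕜] F)
    (B : E →L[𝕜] G) {a : ℝ} (ha : 0 < a) (hA : ∀ f, a * ‖f‖ ≤ ‖A f‖) :
    BddAbove {v : ℝ | ∃ f : E, f ∈ K ∧ ‖A f‖ = 1 ∧ v = ‖B f‖} := by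
  refine ⟨‖B‖ * a⁻¹, ?_⟩
  rintro v ⟨f, -, hAf, rfl⟩
  have hf : ‖f‖ ≤ a⁻¹ := by
    rw [← one_div, le_div_iff₀ ha, mul_comm, ← hAf]
    exact hA f
  exact (B.le_opNorm f).trans (by gcongr)

theorem norm_apply_le_sSup_mul_norm_apply (K : Submodule 𝕜 E) (A : E →L[𝕜] F)
    (B : E →L[𝕜] G) {a : ℝ} (ha : 0 < a) (hA : ∀ f, a * ‖f‖ ≤ ‖A f‖) {f : E} (hf : f ∈ K) :
    ‖B f‖ ≤ sSup {v : ℝ | ∃ f : E, f ∈ K ∧ ‖A f‖ = 1 ∧ v = ‖B f‖} * ‖A f‖ := by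
  rcases (norm_nonneg (A f)).eq_or_lt with hAf | hAf
  · have : f = 0 := norm_le_zero_iff.mp <| le_of_mul_le_mul_left (by simpa [← hAf] using hA f) ha
    simp [this]
  · set c := ‖A f‖
    have hunit : ‖A ((c⁻¹ : 𝕜) • f)‖ = 1 := by
      rw [map_smul, norm_smul, norm_inv, RCLike.norm_ofReal, abs_of_pos hAf, inv_mul_cancel₀ hAf.ne']
    have hle := le_csSup (bddAbove_norm_apply_of_norm_apply_eq_one K A B ha hA)
      ⟨(c⁻¹ : 𝕜) • f, K.smul_mem _ hf, hunit, rfl⟩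
    rw [map_smul, norm_smul, norm_inv, RCLike.norm_ofReal, abs_of_pos hAf,
      inv_mul_le_iff₀ hAf, mul_comm] at hle
    exact hle

end BoundedBelow

section ClosedRange

variable {𝕜 E F : Type*} [RCLike 𝕜]
  [NormedAddCommGroup E] [InnerProductSpace 𝕜 E] [CompleteSpace E]
  [NormedAddCommGroup F] [NormedSpace 𝕜 F]

theorem ContinuousLinearMap.isClosed_range_of_bound_on_orthogonal_ker (T : E →L[𝕜] F) {c : ℝ}
    (hc : 0 < c) (hT : ∀ f ∈ (LinearMap.ker (T : E →ₗ[𝕜] F))ᗮ, c * ‖f‖ ≤ ‖T f‖) :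
    IsClosed (LinearMap.range (T : E →ₗ[𝕜] F) : Set F) := by
  set K := LinearMap.ker (T : E →ₗ[𝕜] F)
  have : CompleteSpace K := T.isClosed_ker.completeSpace_coe
  set S : Kᗮ →L[𝕜] F := T.comp Kᗮ.subtypeL
  have hfactor : ⇑T = S ∘ Kᗮ.orthogonalProjectionOnto := by
    ext f
    have hker : T (K.starProjection f) = 0 := K.starProjection_apply_mem f
    conv_lhs => rw [← K.starProjection_add_starProjection_orthogonal f]
    simp [S, hker]
  have hS : AntilipschitzWith c⁻¹.toNNReal S :=
    S.antilipschitz_of_bound fun x => by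
      rw [Real.coe_toNNReal _ (inv_pos.mpr hc).le, le_inv_mul_iff₀ hc]
      exact hT x x.2
  have hsurj : Function.Surjective Kᗮ.orthogonalProjectionOnto :=
    fun x => ⟨x, Kᗮ.orthogonalProjectionOnto_mem_subspace_eq_self x⟩
  rw [LinearMap.coe_range, ContinuousLinearMap.coe_coe, hfactor, hsurj.range_comp]
  exact hS.isClosed_range S.uniformContinuous

end ClosedRange

theorem one_sub_sq_mul_le_sq {x t h τ c : ℝ} (hx : x ^ 2 = t ^ 2 + h ^ 2) (hh : 0 ≤ h)
    (hhx : h ≤ τ * x) (hc : 0 ≤ c) (hcx : c ≤ x) : (1 - τ ^ 2) * c ^ 2 ≤ t ^ 2 := by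
  rcases le_or_gt (τ ^ 2) 1 with hτ | hτ
  · nlinarith [mul_le_mul hhx hhx hh (hh.trans hhx), mul_le_mul hcx hcx hc (hc.trans hcx)]
  · nlinarith [sq_nonneg c, sq_nonneg t]

namespace MeroIdx

theorem norm_sq_eq_norm_toeplitz_sq_add_norm_hankel_sq {m n : ℕ} (M : L2 n →L[ℂ] L2 m)
    (f : Hardy n) : ‖M f‖ ^ 2 = ‖Toeplitz M f‖ ^ 2 + ‖Hankel M f‖ ^ 2 := by
  have hT : ‖Toeplitz M f‖ = ‖(Hardy m).starProjection (M f)‖ := rfl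
  have hH : Hankel M f = (Hardy m)ᗮ.starProjection (M f) := by
    rw [Submodule.starProjection_orthogonal_val]
    rfl
  rw [hT, hH]
  exact Submodule.norm_sq_eq_add_norm_sq_starProjection (M f) (Hardy m)

theorem mul_norm_le_norm_of_isMulOp {m n : ℕ} {Φ : circ → Matrix (Fin m) (Fin n) ℂ}
    {M : L2 n →L[ℂ] L2 m} (hM : IsMulOp Φ M) {a : ℝ} (ha : 0 < a)
    (hΦ : ∀ᵐ ζ ∂mu, ∀ ξ : EuclideanSpace ℂ (Fin n), a * ‖ξ‖ ≤ ‖matCLM (Φ ζ) ξ‖) (g : L2 n) :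
    a * ‖g‖ ≤ ‖M g‖ := by
  rw [← le_inv_mul_iff₀ ha]
  refine Lp.norm_le_mul_norm_of_ae_le_mul ?_
  filter_upwards [hM g, hΦ] with t hMg hΦt
  rw [hMg, le_inv_mul_iff₀ ha]
  exact hΦt (g t)

theorem toeplitz_bounded_below_closedRange_general (n : ℕ)
    (Ψ : circ → Matrix (Fin n) (Fin n) ℂ)
    (M : L2 n →L[ℂ] L2 n) (hM : IsMulOp Ψ M)
    (a : ℝ) (ha : 0 < a)
    (hW : ∀ᵐ ζ ∂mu, ∀ ξ : EuclideanSpace ℂ (Fin n), a * ‖ξ‖ ≤ ‖matCLM (Ψ ζ) ξ‖)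
    (τ : ℝ)
    (hτ : τ = sSup { v : ℝ | ∃ f : ↥(Hardy n), f ∈ (LinearMap.ker (Toeplitz M : ↥(Hardy n) →ₗ[ℂ] ↥(Hardy n)))ᗮ ∧
        ‖M (↑f : L2 n)‖ = 1 ∧ v = ‖Hankel M f‖ })
    (hτ1 : τ < 1) :
    (∀ f : ↥(Hardy n), f ∈ (LinearMap.ker (Toeplitz M : ↥(Hardy n) →ₗ[ℂ] ↥(Hardy n)))ᗮ →
        (1 - τ ^ 2) * a ^ 2 * ‖f‖ ^ 2 ≤ ‖Toeplitz M f‖ ^ 2) ∧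
      IsClosed ((LinearMap.range (Toeplitz M : ↥(Hardy n) →ₗ[ℂ] ↥(Hardy n)) : Submodule ℂ ↥(Hardy n)) : Set ↥(Hardy n)) := by
  have hA (f : Hardy n) : a * ‖f‖ ≤ ‖M.comp (Hardy n).subtypeL f‖ :=
    mul_norm_le_norm_of_isMulOp hM ha hW f
  have hbound : ∀ f ∈ (LinearMap.ker (Toeplitz M : Hardy n →ₗ[ℂ] Hardy n))ᗮ,
      (1 - τ ^ 2) * a ^ 2 * ‖f‖ ^ 2 ≤ ‖Toeplitz M f‖ ^ 2 := fun f hf => by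
    have hH : ‖Hankel M f‖ ≤ τ * ‖M f‖ :=
      hτ ▸ norm_apply_le_sSup_mul_norm_apply _ (M.comp (Hardy n).subtypeL) (Hankel M) ha hA hf
    simpa only [mul_pow, mul_assoc] using one_sub_sq_mul_le_sq
      (norm_sq_eq_norm_toeplitz_sq_add_norm_hankel_sq M f) (norm_nonneg _) hH
      (by positivity) (hA f)
  have hτ0 : 0 ≤ τ := hτ ▸ Real.sSup_nonneg fun v ⟨_, _, _, hv⟩ => hv ▸ norm_nonneg _
  have hτ2 : 0 < 1 - τ ^ 2 := by nlinarith
  refine ⟨hbound, (Toeplitz M).isClosed_range_of_bound_on_orthogonal_ker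
    (mul_pos (Real.sqrt_pos.mpr hτ2) ha) fun f hf => ?_⟩
  rw [← pow_le_pow_iff_left₀ (by positivity) (norm_nonneg _) two_ne_zero, mul_pow, mul_pow,
    Real.sq_sqrt hτ2.le]
  exact hbound f hf

/-- With `W = Ψ*Ψ ≥ a² I` a.e. (so `‖f‖_W = ‖Ψ f‖₂`), if
`τ = sup { ‖H_Ψ f‖ : f ⊥ ker T_Ψ, ‖f‖_W = 1 } < 1`, then
`‖T_Ψ f‖² ≥ (1 − τ²) a² ‖f‖²` on `(ker T_Ψ)ᗮ`; in particular `T_Ψ` has closed range. -/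
theorem toeplitz_bounded_below_closedRange (n : ℕ)
    (Ψ : circ → Matrix (Fin n) (Fin n) ℂ) (hΨ : MemLinf Ψ)
    (M : L2 n →L[ℂ] L2 n) (hM : IsMulOp Ψ M)
    (a : ℝ) (ha : 0 < a)
    (hW : ∀ᵐ ζ ∂mu, ∀ ξ : EuclideanSpace ℂ (Fin n), a * ‖ξ‖ ≤ ‖matCLM (Ψ ζ) ξ‖)
    (τ : ℝ)
    (hτ : τ = sSup { v : ℝ | ∃ f : ↥(Hardy n), f ∈ (LinearMap.ker (Toeplitz M : ↥(Hardy n) →ₗ[ℂ] ↥(Hardy n)))ᗮ ∧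
        ‖M (↑f : L2 n)‖ = 1 ∧ v = ‖Hankel M f‖ })
    (hτ1 : τ < 1) :
    (∀ f : ↥(Hardy n), f ∈ (LinearMap.ker (Toeplitz M : ↥(Hardy n) →ₗ[ℂ] ↥(Hardy n)))ᗮ →
        (1 - τ ^ 2) * a ^ 2 * ‖f‖ ^ 2 ≤ ‖Toeplitz M f‖ ^ 2) ∧
      IsClosed ((LinearMap.range (Toeplitz M : ↥(Hardy n) →ₗ[ℂ] ↥(Hardy n)) : Submodule ℂ ↥(Hardy n)) : Set ↥(Hardy n)) :=
  toeplitz_bounded_below_closedRange_general n Ψ M hM a ha hW τ hτ hτ1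

end MeroIdx
end
end
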